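/- arXiv:1607.07955 — 2 statements merged into one kernel-verified Lean document; each statement's English description precedes it below -/
import Mathlib

section
/- For all integers m and k with 1 ≤ k ≤ m, the identity ∂_i^k(L_m) = (Σ_{l=0}^{k−1} (a^l − a^{m−1−l}·b))·∂_i^{k−1}(L_{m−1}) + a^k·x_i·∂_i^k(L_{m−1}) − ∂_i^k(L_{m−1})·x_i holds in T. -/
/-!
`∂_i` lowers the `ℤⁿ`-degree by `e_i`, so `∂_i^k L_m` is homogeneous of degree
`(m - k) e_i + e_j`. For such `u` the twisted Leibniz rule reads
`∂_i (x_i u) = u + a x_i ∂_i u` and `∂_i (u x_i) = ∂_i u x_i + a^(m-k) b u`. Applying `∂_i` to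
`L_{m+1} = x_i L_m - L_m x_i` and inducting on `k`, each further derivative adds the term `a^k - a^(m-k) b` to the scalar coefficient.
-/

noncomputable section

/-- The `ℤⁿ`-degree of a word: the multidegree counting occurrences of each letter. -/
def degw {n : ℕ} (w : FreeMonoid (Fin n)) : Fin n → ℕ :=
  fun k => (FreeMonoid.toList w).count k

/-- The word `u` viewed as an element of the free algebra `T = F⟨x_1,…,x_n⟩`,
realized as the monoid algebra of the free monoid on `n` letters. -/
def wordOf (F : Type) [Field F] {n : ℕ} (u : FreeMonoid (Fin n)) :
    MonoidAlgebra F (FreeMonoid (Fin n)) :=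
  MonoidAlgebra.of F (FreeMonoid (Fin n)) u

/-- `x` is `ℤⁿ`-homogeneous of degree `d`: every word occurring in `x` has degree `d`. -/
def IsHomog (F : Type) [Field F] {n : ℕ}
    (x : MonoidAlgebra F (FreeMonoid (Fin n))) (d : Fin n → ℕ) : Prop :=
  ∀ w ∈ (x.coeff : FreeMonoid (Fin n) →₀ F).support, degw w = d

open Finset

section Degree

variable {n : ℕ}

@[simp]
lemma degw_mul (u v : FreeMonoid (Fin n)) : degw (u * v) = degw u + degw v := by
  funext k
  simp [degw, List.count_append]

@[simp]
lemma degw_of (k : Fin n) : degw (FreeMonoid.of k) = Pi.single k 1 := by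
  funext l
  simp [degw, FreeMonoid.toList_of, List.count_cons, Pi.single_apply, eq_comm (a := k)]

lemma prod_pow_single_add_single {M : Type*} [CommMonoid M] (f : Fin n → M) (i j : Fin n)
    (a b : ℕ) :
    ∏ l, f l ^ (Pi.single i a + Pi.single j b : Fin n → ℕ) l = f i ^ a * f j ^ b := by
  simp only [Pi.add_apply, pow_add, prod_mul_distrib]
  simp [Pi.single_apply, pow_ite]

end Degree

section Homogeneous

variable {F : Type} [Field F] {n : ℕ}

lemma isHomog_wordOf (u : FreeMonoid (Fin n)) : IsHomog F (wordOf F u) (degw u) := by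
  intro w hw
  rw [mem_singleton.1 (Finsupp.support_single_subset hw)]

lemma isHomog_zero (d : Fin n → ℕ) :
    IsHomog F (0 : MonoidAlgebra F (FreeMonoid (Fin n))) d := by
  simp [IsHomog]

namespace IsHomog

variable {x y : MonoidAlgebra F (FreeMonoid (Fin n))} {d e : Fin n → ℕ}

lemma smul (c : F) (hx : IsHomog F x d) : IsHomog F (c • x) d := by
  intro w hw
  exact hx w (Finsupp.support_smul hw)

lemma add (hx : IsHomog F x d) (hy : IsHomog F y d) : IsHomog F (x + y) d := by
  classical
  intro w hw
  rcases mem_union.1 (Finsupp.support_add hw) with h | h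
  exacts [hx w h, hy w h]

lemma neg (hx : IsHomog F x d) : IsHomog F (-x) d := by
  simpa using hx.smul (-1)

lemma sub (hx : IsHomog F x d) (hy : IsHomog F y d) : IsHomog F (x - y) d := by
  simpa [sub_eq_add_neg] using hx.add hy.neg

lemma mul (hx : IsHomog F x d) (hy : IsHomog F y e) : IsHomog F (x * y) (d + e) := by
  classical
  intro w hw
  obtain ⟨u, hu, v, hv, rfl⟩ := mem_mul.1 (MonoidAlgebra.support_coeff_mul_subset x y hw)
  rw [degw_mul, hx u hu, hy v hv]

end IsHomog

lemma isHomog_sum {ι : Type*} (s : Finset ι) {f : ι → MonoidAlgebra F (FreeMonoid (Fin n))}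
    {d : Fin n → ℕ} (h : ∀ a ∈ s, IsHomog F (f a) d) : IsHomog F (∑ a ∈ s, f a) d := by
  classical
  induction s using Finset.induction_on with
  | empty => simpa using isHomog_zero d
  | insert a s ha ih =>
    rw [sum_insert ha]
    exact (h a (mem_insert_self a s)).add (ih fun b hb => h b (mem_insert_of_mem hb))

lemma eq_sum_smul_wordOf (x : MonoidAlgebra F (FreeMonoid (Fin n))) :
    x = ∑ w ∈ x.coeff.support, x.coeff w • wordOf F w := by
  conv_lhs => rw [← MonoidAlgebra.sum_coeff_single x]
  refine sum_congr rfl fun w _ => ?_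
  rw [wordOf, MonoidAlgebra.of_apply, MonoidAlgebra.smul_single', mul_one]

end Homogeneous

section SkewPartialDeriv

variable {F : Type} [Field F] {n : ℕ}

lemma wordOf_mul (u v : FreeMonoid (Fin n)) : wordOf F (u * v) = wordOf F u * wordOf F v :=
  map_mul (MonoidAlgebra.of F (FreeMonoid (Fin n))) u v

structure IsSkewPartialDeriv (χ : Fin n → F) (i : Fin n)
    (δ : Module.End F (MonoidAlgebra F (FreeMonoid (Fin n)))) : Prop where
  map_one : δ 1 = 0
  map_of : ∀ k, δ (wordOf F (FreeMonoid.of k)) = if i = k then 1 else 0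
  map_mul : ∀ u v d, IsHomog F u d → δ (u * v) = δ u * v + (∏ k, χ k ^ d k) • (u * δ v)

namespace IsSkewPartialDeriv

variable {χ : Fin n → F} {i : Fin n} {δ : Module.End F (MonoidAlgebra F (FreeMonoid (Fin n)))}
  (hδ : IsSkewPartialDeriv χ i δ)
include hδ

lemma map_of_mul (k : Fin n) (u : MonoidAlgebra F (FreeMonoid (Fin n))) :
    δ (wordOf F (FreeMonoid.of k) * u) =
      (if i = k then u else 0) + χ k • (wordOf F (FreeMonoid.of k) * δ u) := by
  rw [hδ.map_mul _ _ _ (isHomog_wordOf _), hδ.map_of, ite_mul, one_mul, zero_mul, degw_of]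
  congr 2
  simp [Pi.single_apply, pow_ite]

lemma map_mul_of {u : MonoidAlgebra F (FreeMonoid (Fin n))} {d : Fin n → ℕ}
    (hu : IsHomog F u d) :
    δ (u * wordOf F (FreeMonoid.of i)) =
      δ u * wordOf F (FreeMonoid.of i) + (∏ k, χ k ^ d k) • u := by
  rw [hδ.map_mul _ _ _ hu, hδ.map_of, if_pos rfl, mul_one]

lemma map_wordOf_eq_zero {u : FreeMonoid (Fin n)} (hu : degw u i = 0) : δ (wordOf F u) = 0 := by
  induction u using FreeMonoid.recOn with
  | one => exact hδ.map_one
  | of_mul k u ih =>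
    simp only [degw_mul, degw_of, Pi.add_apply, Pi.single_apply, Nat.add_eq_zero_iff] at hu
    rw [wordOf_mul, hδ.map_of_mul, if_neg (fun h => by simp [h] at hu), ih hu.2, mul_zero,
      smul_zero, add_zero]

lemma isHomog_map_wordOf (u : FreeMonoid (Fin n)) {d : Fin n → ℕ}
    (hd : degw u = d + Pi.single i 1) : IsHomog F (δ (wordOf F u)) d := by
  induction u using FreeMonoid.recOn generalizing d with
  | one =>
    change IsHomog F (δ 1) d
    rw [hδ.map_one]
    exact isHomog_zero d
  | of_mul k u ih =>
    rw [degw_mul, degw_of] at hd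
    rw [wordOf_mul, hδ.map_of_mul]
    refine IsHomog.add ?_ (IsHomog.smul _ ?_)
    · split_ifs with hik
      · subst hik
        rw [add_comm] at hd
        exact add_right_cancel hd ▸ isHomog_wordOf u
      · exact isHomog_zero d
    · rcases Nat.eq_zero_or_pos (degw u i) with h0 | hpos
      · rw [hδ.map_wordOf_eq_zero h0, mul_zero]
        exact isHomog_zero d
      · have hsplit : degw u = (degw u - Pi.single i 1) + Pi.single i 1 := by
          funext l
          by_cases hl : l = i
          · subst hl
            simp only [Pi.add_apply, Pi.sub_apply, Pi.single_eq_same]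
            omega
          · simp [hl]
        convert (isHomog_wordOf (FreeMonoid.of k)).mul (ih hsplit) using 1
        funext l
        have hdl := congrFun hd l
        by_cases hl : l = i
        · subst hl
          simp only [Pi.add_apply, Pi.sub_apply, Pi.single_eq_same, degw_of] at hdl ⊢
          omega
        · simp only [Pi.add_apply, Pi.sub_apply, Pi.single_eq_of_ne hl, degw_of] at hdl ⊢
          omega

lemma isHomog_map {x : MonoidAlgebra F (FreeMonoid (Fin n))} {d : Fin n → ℕ}
    (hx : IsHomog F x (d + Pi.single i 1)) : IsHomog F (δ x) d := by
  rw [eq_sum_smul_wordOf x, map_sum]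
  refine isHomog_sum _ fun w hw => ?_
  rw [map_smul]
  exact (hδ.isHomog_map_wordOf w (hx w hw)).smul _

end IsSkewPartialDeriv

end SkewPartialDeriv

section IteratedCommutator

variable {F : Type} [Field F] {n : ℕ} {i j : Fin n}
  {L : ℕ → MonoidAlgebra F (FreeMonoid (Fin n))}
  (hL0 : L 0 = wordOf F (FreeMonoid.of j))
  (hLs : ∀ m, L (m + 1) = wordOf F (FreeMonoid.of i) * L m - L m * wordOf F (FreeMonoid.of i))
include hL0 hLs

lemma isHomog_iteratedCommutator (m : ℕ) : IsHomog F (L m) (Pi.single i m + Pi.single j 1) := by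
  induction m with
  | zero => simpa [hL0] using isHomog_wordOf (F := F) (FreeMonoid.of j)
  | succ m ih =>
    have hx := isHomog_wordOf (F := F) (FreeMonoid.of i)
    rw [degw_of] at hx
    rw [hLs, Pi.single_add]
    refine IsHomog.sub ?_ ?_
    · convert hx.mul ih using 1
      abel
    · convert ih.mul hx using 1
      abel

variable {χ : Fin n → F} {δ : Module.End F (MonoidAlgebra F (FreeMonoid (Fin n)))}
  (hδ : IsSkewPartialDeriv χ i δ)
include hδ

lemma IsSkewPartialDeriv.isHomog_pow_apply_iteratedCommutator {k m : ℕ} (hkm : k ≤ m) :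
    IsHomog F ((δ ^ k) (L m)) (Pi.single i (m - k) + Pi.single j 1) := by
  induction k with
  | zero => simpa using isHomog_iteratedCommutator hL0 hLs m
  | succ k ih =>
    rw [pow_succ', Module.End.mul_apply]
    refine hδ.isHomog_map ?_
    convert ih (by omega) using 1
    rw [show m - k = m - (k + 1) + 1 by omega, Pi.single_add]
    abel

lemma IsSkewPartialDeriv.pow_succ_apply_iteratedCommutator_succ {k m : ℕ} (hkm : k ≤ m) :
    (δ ^ (k + 1)) (L (m + 1)) =
      (∑ l ∈ range (k + 1), (χ i ^ l - χ i ^ (m - l) * χ j)) • (δ ^ k) (L m)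
        + χ i ^ (k + 1) • (wordOf F (FreeMonoid.of i) * (δ ^ (k + 1)) (L m))
        - (δ ^ (k + 1)) (L m) * wordOf F (FreeMonoid.of i) := by
  have hmul_of (k' : ℕ) (hk' : k' ≤ m) :=
    hδ.map_mul_of (hδ.isHomog_pow_apply_iteratedCommutator hL0 hLs hk')
  simp only [prod_pow_single_add_single, pow_one] at hmul_of
  induction k with
  | zero =>
    have hmul_of_zero := hmul_of 0 (Nat.zero_le m)
    simp only [pow_zero, Module.End.one_apply, Nat.sub_zero] at hmul_of_zero ⊢
    rw [zero_add, pow_one, hLs, map_sub, hδ.map_of_mul, if_pos rfl, hmul_of_zero, sum_range_one]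
    module
  | succ k ih =>
    rw [pow_succ' δ (k + 1), Module.End.mul_apply, ih (by omega), map_sub, map_add, map_smul,
      map_smul, hδ.map_of_mul, if_pos rfl, hmul_of (k + 1) hkm, ← Module.End.mul_apply,
      ← pow_succ', sum_range_succ _ (k + 1)]
    module

end IteratedCommutator

theorem stmt_1_general (F : Type) [Field F] (n : ℕ)
    (q : Fin n → Fin n → F)
    (D : Fin n → Module.End F (MonoidAlgebra F (FreeMonoid (Fin n))))
    (hD1 : ∀ i, D i 1 = 0)
    (hDx : ∀ i k : Fin n, D i (wordOf F (FreeMonoid.of k)) = if i = k then 1 else 0)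
    (hDmul : ∀ (i : Fin n) (u v : MonoidAlgebra F (FreeMonoid (Fin n))) (d : Fin n → ℕ),
      IsHomog F u d →
      D i (u * v) = D i u * v + (∏ k : Fin n, (q i k)⁻¹ ^ d k) • (u * D i v))
    (i j : Fin n)
    (L : ℕ → MonoidAlgebra F (FreeMonoid (Fin n)))
    (hL0 : L 0 = wordOf F (FreeMonoid.of j))
    (hLs : ∀ m : ℕ, L (m + 1) =
      wordOf F (FreeMonoid.of i) * L m - L m * wordOf F (FreeMonoid.of i))
    (k m : ℕ) (hk : 1 ≤ k) (hkm : k ≤ m) :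
    (D i ^ k) (L m) =
      (∑ l ∈ Finset.range k, ((q i i)⁻¹ ^ l - (q i i)⁻¹ ^ (m - 1 - l) * (q i j)⁻¹)) •
          (D i ^ (k - 1)) (L (m - 1))
        + (q i i)⁻¹ ^ k • (wordOf F (FreeMonoid.of i) * (D i ^ k) (L (m - 1)))
        - (D i ^ k) (L (m - 1)) * wordOf F (FreeMonoid.of i) := by
  obtain ⟨k, rfl⟩ : ∃ k', k = k' + 1 := ⟨k - 1, by omega⟩
  obtain ⟨m, rfl⟩ : ∃ m', m = m' + 1 := ⟨m - 1, by omega⟩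
  have hD : IsSkewPartialDeriv (fun l => (q i l)⁻¹) i (D i) := ⟨hD1 i, hDx i, hDmul i⟩
  simpa only [Nat.add_sub_cancel] using
    hD.pow_succ_apply_iteratedCommutator_succ hL0 hLs (by omega : k ≤ m)

/-- the recursion formula for `∂_i^k(L_m)`, `1 ≤ k ≤ m`, where
`a = q_{ii}⁻¹`, `b = q_{ij}⁻¹`, `L_0 = x_j` and `L_m = x_i L_{m−1} − L_{m−1} x_i`. -/
theorem stmt_1 (F : Type) [Field F] [CharZero F] (n : ℕ) (hn : 2 ≤ n)
    (q : Fin n → Fin n → F) (hq : ∀ k l, q k l ≠ 0)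
    (D : Fin n → Module.End F (MonoidAlgebra F (FreeMonoid (Fin n))))
    (hD1 : ∀ i, D i 1 = 0)
    (hDx : ∀ i k : Fin n, D i (wordOf F (FreeMonoid.of k)) = if i = k then 1 else 0)
    (hDmul : ∀ (i : Fin n) (u v : MonoidAlgebra F (FreeMonoid (Fin n))) (d : Fin n → ℕ),
      IsHomog F u d →
      D i (u * v) = D i u * v + (∏ k : Fin n, (q i k)⁻¹ ^ d k) • (u * D i v))
    (i j : Fin n) (hij : i ≠ j)
    (L : ℕ → MonoidAlgebra F (FreeMonoid (Fin n)))
    (hL0 : L 0 = wordOf F (FreeMonoid.of j))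
    (hLs : ∀ m : ℕ, L (m + 1) =
      wordOf F (FreeMonoid.of i) * L m - L m * wordOf F (FreeMonoid.of i))
    (k m : ℕ) (hk : 1 ≤ k) (hkm : k ≤ m) :
    (D i ^ k) (L m) =
      (∑ l ∈ Finset.range k, ((q i i)⁻¹ ^ l - (q i i)⁻¹ ^ (m - 1 - l) * (q i j)⁻¹)) •
          (D i ^ (k - 1)) (L (m - 1))
        + (q i i)⁻¹ ^ k • (wordOf F (FreeMonoid.of i) * (D i ^ k) (L (m - 1)))
        - (D i ^ k) (L (m - 1)) * wordOf F (FreeMonoid.of i) :=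
  stmt_1_general F n q D hD1 hDx hDmul i j L hL0 hLs k m hk hkm

end
end

section
/- For every Lyndon word l, in the free algebra T one has [l]⁻ = (−1)^{|l|−1}·l + Σ_w a_w·w, where the sum runs over words w with |w| = |l| and w > l and the a_w are scalars in F. -/
noncomputable section

/-- Lexicographic order on words over the ordered alphabet `x_1 < ⋯ < x_n`. -/
def wlt {n : ℕ} (u v : FreeMonoid (Fin n)) : Prop :=
  List.Lex (· < ·) (FreeMonoid.toList u) (FreeMonoid.toList v)

/-- Lyndon word: nonempty and smaller than every rotation `u₂u₁` coming from a
factorization `u = u₁u₂` into nonempty words. -/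
def IsLyndon {n : ℕ} (u : FreeMonoid (Fin n)) : Prop :=
  u ≠ 1 ∧ ∀ v w : FreeMonoid (Fin n), v ≠ 1 → w ≠ 1 → u = v * w → wlt u (w * v)

/-- `(v, w)` is the Shirshov decomposition of `u`: both factors are Lyndon,
`u = v·w`, and `v` has minimal length among all such factorizations. -/
def IsShirshov {n : ℕ} (u v w : FreeMonoid (Fin n)) : Prop :=
  IsLyndon v ∧ IsLyndon w ∧ u = v * w ∧
    ∀ v' w' : FreeMonoid (Fin n), IsLyndon v' → IsLyndon w' → u = v' * w' →
      FreeMonoid.length v ≤ FreeMonoid.length v'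

/-- The bicharacter `χ` determined by `χ(e_k, e_l) = q_{kl}`. -/
def chiF (F : Type) [Field F] {n : ℕ} (q : Fin n → Fin n → F) (d e : Fin n → ℕ) : F :=
  ∏ k : Fin n, ∏ l : Fin n, q k l ^ (d k * e l)

/-! Induction on the length of `l`. A Lyndon word is smaller than each of its proper suffixes,
so for the Shirshov decomposition `l = v w` we have `l < w`. Write `[v]⁻ = ε_v v + …` and
`[w]⁻ = ε_w w + …`, the dots standing for greater words of the same length. Every word of
`[w]⁻[v]⁻` starts with a word `≥ w > l` that is shorter than `l`, so it exceeds `l`. Every word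
of `[v]⁻[w]⁻` other than `v w = l` is `a b` with `a ≥ v`, `b ≥ w` of the lengths of `v`, `w`,
not both equalities, so it exceeds `v w`. Hence the lowest word of `[l]⁻` is `l`, with
coefficient `-ε_v ε_w`.

The Shirshov decomposition exists because for `w` the least proper suffix of `l`, both `w` and
the complementary prefix are Lyndon. -/

namespace List

variable {α : Type*} [LinearOrder α] {a b l p s v w : List α}

theorem append_lt_append_of_lt_of_not_prefix (h : a < b) (hab : ¬ a <+: b) (c d : List α) :
    a ++ c < b ++ d := by
  induction h with
  | nil => exact absurd nil_prefix hab
  | rel h => exact Lex.rel h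
  | cons _ ih => exact Lex.cons (ih fun hp => hab (cons_prefix_cons.mpr ⟨rfl, hp⟩))

theorem append_lt_append_of_lt_of_length_le (h : a < b) (hl : b.length ≤ a.length)
    (c d : List α) : a ++ c < b ++ d :=
  append_lt_append_of_lt_of_not_prefix h (fun hp => h.ne (hp.eq_of_length_le hl)) c d

theorem lt_of_append_lt_append_left (h : l ++ a < l ++ b) : a < b := by
  induction l with
  | nil => exact h
  | cons x l ih => exact ih (lex_cons_iff.mp h)

def IsLyndon (l : List α) : Prop :=
  l ≠ [] ∧ ∀ p s : List α, p ≠ [] → s ≠ [] → l = p ++ s → l < s ++ p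

theorem IsLyndon.lt_of_eq_append (h : l.IsLyndon) (hp : p ≠ []) (hs : s ≠ [])
    (he : l = p ++ s) : l < s := by
  have hrot : l < s ++ p := h.2 p s hp hs he
  have hlen : s.length < l.length := by simp [he, length_pos_iff.mpr hp]
  refine lt_of_not_ge fun hsl => ?_
  have hsl : s < l := hsl.lt_of_ne fun hsl => hlen.ne (hsl ▸ rfl)
  by_cases hpre : s <+: l
  · obtain ⟨t, ht⟩ := hpre
    have htp : t < p := lt_of_append_lt_append_left (ht ▸ hrot)
    have htlen : p.length ≤ t.length := by
      have := congrArg length (he.symm.trans ht.symm); simp at this; omega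
    have ht0 : t ≠ [] := by rintro rfl; simp at htlen; exact hp htlen
    have := append_lt_append_of_lt_of_length_le htp htlen s s
    exact (h.2 s t hs ht0 ht.symm).not_gt (he ▸ this)
  · exact hrot.not_gt (by simpa using append_lt_append_of_lt_of_not_prefix hsl hpre p [])

theorem isLyndon_of_lt_suffix (hl : l ≠ [])
    (h : ∀ p s : List α, p ≠ [] → s ≠ [] → l = p ++ s → l < s) : l.IsLyndon :=
  ⟨hl, fun p s hp hs he => Lex.append_right _ p (h p s hp hs he)⟩

theorem exists_eq_append_forall_le_suffix (hl : 2 ≤ l.length) :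
    ∃ v w : List α, v ≠ [] ∧ w ≠ [] ∧ l = v ++ w ∧
      ∀ p s : List α, p ≠ [] → s ≠ [] → l = p ++ s → w ≤ s := by
  let S : Set (List α) := {s | ∃ p, p ≠ [] ∧ s ≠ [] ∧ l = p ++ s}
  have hfin : S.Finite :=
    l.tails.finite_toSet.subset fun s ⟨p, _, _, he⟩ => (mem_tails s l).mpr ⟨p, he.symm⟩
  have hne : S.Nonempty := by
    obtain ⟨x, t, rfl⟩ := exists_cons_of_ne_nil (ne_nil_of_length_pos (by omega : 0 < l.length))
    exact ⟨t, [x], by simp, ne_nil_of_length_pos (by simp at hl; omega), rfl⟩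
  obtain ⟨w, ⟨v, hv, hw, he⟩, hmin⟩ := S.exists_min_image id hfin hne
  exact ⟨v, w, hv, hw, he, fun p s hp hs he' => hmin s ⟨p, hp, hs, he'⟩⟩

theorem IsLyndon.exists_eq_append_isLyndon (h : l.IsLyndon) (hl : 2 ≤ l.length) :
    ∃ v w : List α, v.IsLyndon ∧ w.IsLyndon ∧ l = v ++ w := by
  obtain ⟨v, w, hv, hw, he, hmin⟩ := exists_eq_append_forall_le_suffix hl
  refine ⟨v, w, isLyndon_of_lt_suffix hv fun p s hp hs hps => ?_,
    isLyndon_of_lt_suffix hw fun p s hp hs hps => ?_, he⟩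
  · have hls : l < s ++ w := h.lt_of_eq_append hp (by simp [hs]) (by simp [he, hps])
    rcases lt_trichotomy v s with hvs | rfl | hsv
    · exact hvs
    · exact absurd (by simpa using hps) hp
    · by_cases hpre : s <+: v
      · obtain ⟨t, rfl⟩ := hpre
        have ht : t ≠ [] := by
          rintro rfl
          exact hp (by simpa using hps)
        have htw : t ++ w < w := lt_of_append_lt_append_left (by simpa [he] using hls)
        exact absurd (hmin s (t ++ w) hs (by simp [ht]) (by simp [he])) htw.not_ge
      · exact absurd hls (he ▸ append_lt_append_of_lt_of_not_prefix hsv hpre w w).not_gt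
  · refine (hmin (v ++ p) s (by simp [hv]) hs (by simp [he, hps])).lt_of_ne ?_
    rintro rfl
    exact hp (by simpa using hps)

end List

theorem FreeMonoid.toList_eq_nil_iff {α : Type*} {u : FreeMonoid α} : u.toList = [] ↔ u = 1 :=
  toList.injective.eq_iff' toList_one

theorem isLyndon_iff_isLyndon_toList {n : ℕ} (u : FreeMonoid (Fin n)) :
    IsLyndon u ↔ (FreeMonoid.toList u).IsLyndon := by
  refine and_congr FreeMonoid.toList_eq_nil_iff.symm.not ?_
  refine FreeMonoid.toList.forall_congr fun v => FreeMonoid.toList.forall_congr fun w => ?_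
  simp [wlt, FreeMonoid.toList_eq_nil_iff, ← FreeMonoid.toList_mul,
    FreeMonoid.toList.apply_eq_iff_eq]

theorem exists_isShirshov {n : ℕ} {u : FreeMonoid (Fin n)} (hu : IsLyndon u)
    (h2 : 2 ≤ u.length) : ∃ v w, IsShirshov u v w := by
  classical
  have hex : ∃ k, ∃ v w : FreeMonoid (Fin n),
      IsLyndon v ∧ IsLyndon w ∧ u = v * w ∧ v.length = k := by
    obtain ⟨v, w, hv, hw, he⟩ :=
      ((isLyndon_iff_isLyndon_toList u).mp hu).exists_eq_append_isLyndon h2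
    refine ⟨_, FreeMonoid.ofList v, FreeMonoid.ofList w, ?_, ?_, he, rfl⟩ <;>
      simpa [isLyndon_iff_isLyndon_toList]
  obtain ⟨v, w, hv, hw, he, hk⟩ := Nat.find_spec hex
  exact ⟨v, w, hv, hw, he, fun v' w' hv' hw' he' =>
    hk ▸ Nat.find_min' hex ⟨v', w', hv', hw', he', rfl⟩⟩

theorem neg_one_pow_add_sub_one {R : Type*} [Monoid R] [HasDistribNeg R] {m k : ℕ}
    (hm : m ≠ 0) (hk : k ≠ 0) : (-1 : R) ^ (m + k - 1) = -((-1) ^ (m - 1) * (-1) ^ (k - 1)) := by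
  rw [show m + k - 1 = m - 1 + (k - 1) + 1 by omega, pow_succ, pow_add, mul_neg_one]

open scoped Pointwise in
theorem MonoidAlgebra.mul_mem_span_of_image {k G : Type*} [CommSemiring k] [Monoid G]
    {S T U : Set G} (hST : S * T ⊆ U) {x y : MonoidAlgebra k G}
    (hx : x ∈ Submodule.span k (of k G '' S)) (hy : y ∈ Submodule.span k (of k G '' T)) :
    x * y ∈ Submodule.span k (of k G '' U) := by
  have hxy := Submodule.mul_mem_mul hx hy
  rw [Submodule.span_mul_span, ← Set.image_mul] at hxy
  exact Submodule.span_mono (Set.image_mono hST) hxy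

section FreeAlgebra

variable {n : ℕ} {F : Type} [Field F]

def wordsAbove (u : FreeMonoid (Fin n)) : Set (FreeMonoid (Fin n)) :=
  {w | w.length = u.length ∧ wlt u w}

theorem length_eq_and_le_of_mem_insert_wordsAbove {u w : FreeMonoid (Fin n)}
    (hw : w ∈ insert u (wordsAbove u)) : w.length = u.length ∧ u.toList ≤ w.toList := by
  rcases hw with rfl | ⟨hlen, hlt⟩
  · exact ⟨rfl, le_rfl⟩
  · exact ⟨hlen, le_of_lt (α := List (Fin n)) hlt⟩

variable (F) in
def HasLowestTerm (x : MonoidAlgebra F (FreeMonoid (Fin n))) (c : F) (u : FreeMonoid (Fin n)) :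
    Prop :=
  x - c • wordOf F u ∈ Submodule.span F (wordOf F '' wordsAbove u)

theorem HasLowestTerm.mem_span_insert {x : MonoidAlgebra F (FreeMonoid (Fin n))} {c : F}
    {u : FreeMonoid (Fin n)} (h : HasLowestTerm F x c u) :
    x ∈ Submodule.span F (wordOf F '' insert u (wordsAbove u)) := by
  rw [← sub_add_cancel x (c • wordOf F u)]
  refine add_mem (Submodule.span_mono (Set.image_mono (Set.subset_insert _ _)) h) ?_
  exact Submodule.smul_mem _ _ (Submodule.subset_span ⟨u, Set.mem_insert _ _, rfl⟩)

theorem HasLowestTerm.commutator {x y : MonoidAlgebra F (FreeMonoid (Fin n))} {a b : F}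
    {v w : FreeMonoid (Fin n)} (hvw : IsLyndon (v * w)) (hv : v ≠ 1) (hw : w ≠ 1)
    (hx : HasLowestTerm F x a v) (hy : HasLowestTerm F y b w) :
    HasLowestTerm F (y * x - x * y) (-(a * b)) (v * w) := by
  have hlt : (v * w).toList < w.toList :=
    ((isLyndon_iff_isLyndon_toList _).mp hvw).lt_of_eq_append
      (FreeMonoid.toList_eq_nil_iff.not.mpr hv)
      (FreeMonoid.toList_eq_nil_iff.not.mpr hw) (FreeMonoid.toList_mul v w)
  have hyx : y * x ∈ Submodule.span F (wordOf F '' wordsAbove (v * w)) := by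
    refine MonoidAlgebra.mul_mem_span_of_image ?_ hy.mem_span_insert hx.mem_span_insert
    rintro _ ⟨c, hc, d, hd, rfl⟩
    obtain ⟨hclen, hcle⟩ := length_eq_and_le_of_mem_insert_wordsAbove hc
    obtain ⟨hdlen, -⟩ := length_eq_and_le_of_mem_insert_wordsAbove hd
    refine ⟨by simp [FreeMonoid.length_mul, hclen, hdlen, add_comm], ?_⟩
    exact List.Lex.append_right _ _ (hlt.trans_le hcle)
  have hxy : x * (y - b • wordOf F w) + (x - a • wordOf F v) * (b • wordOf F w) ∈
      Submodule.span F (wordOf F '' wordsAbove (v * w)) := by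
    refine add_mem (MonoidAlgebra.mul_mem_span_of_image ?_ hx.mem_span_insert hy)
      (MonoidAlgebra.mul_mem_span_of_image ?_ hx
        (Submodule.smul_mem _ _ (Submodule.subset_span ⟨w, rfl, rfl⟩)))
    · rintro _ ⟨c, hc, d, ⟨hdlen, hdlt⟩, rfl⟩
      obtain ⟨hclen, hcle⟩ := length_eq_and_le_of_mem_insert_wordsAbove hc
      refine ⟨by simp [FreeMonoid.length_mul, hclen, hdlen], ?_⟩
      rcases hcle.eq_or_lt with hcv | hcv
      · simpa [wlt, FreeMonoid.toList_mul, hcv] using List.append_left_lt hdlt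
      · exact List.append_lt_append_of_lt_of_length_le hcv hclen.le _ _
    · rintro _ ⟨c, ⟨hclen, hclt⟩, d, rfl, rfl⟩
      exact ⟨by simp [FreeMonoid.length_mul, hclen],
        List.append_lt_append_of_lt_of_length_le hclt hclen.le _ _⟩
  have hprod : wordOf F (v * w) = wordOf F v * wordOf F w := map_mul (MonoidAlgebra.of F _) v w
  unfold HasLowestTerm
  convert sub_mem hyx hxy using 1
  rw [hprod]
  simp only [mul_sub, sub_mul, mul_smul_comm, smul_mul_assoc]
  module

theorem hasLowestTerm_of_isLyndon
    {brm : FreeMonoid (Fin n) → MonoidAlgebra F (FreeMonoid (Fin n))}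
    (hbrm1 : ∀ k : Fin n, brm (FreeMonoid.of k) = wordOf F (FreeMonoid.of k))
    (hbrm2 : ∀ u v w : FreeMonoid (Fin n), IsLyndon u → 2 ≤ FreeMonoid.length u →
      IsShirshov u v w → brm u = brm w * brm v - brm v * brm w)
    {l : FreeMonoid (Fin n)} (hl : IsLyndon l) :
    HasLowestTerm F (brm l) ((-1) ^ (l.length - 1)) l := by
  induction hN : l.length using Nat.strong_induction_on generalizing l with
  | _ N ih =>
    subst hN
    have hpos : l.length ≠ 0 := FreeMonoid.length_eq_zero.not.mpr hl.1
    obtain hl1 | hl2 : l.length = 1 ∨ 2 ≤ l.length := by omega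
    · obtain ⟨k, rfl⟩ := FreeMonoid.length_eq_one.mp hl1
      simp [HasLowestTerm, hbrm1]
    · obtain ⟨v, w, hsh⟩ := exists_isShirshov hl hl2
      rw [hbrm2 _ v w hl hl2 hsh]
      obtain ⟨hv, hw, rfl, -⟩ := hsh
      have hvpos : v.length ≠ 0 := FreeMonoid.length_eq_zero.not.mpr hv.1
      have hwpos : w.length ≠ 0 := FreeMonoid.length_eq_zero.not.mpr hw.1
      rw [FreeMonoid.length_mul, neg_one_pow_add_sub_one hvpos hwpos]
      exact (ih _ (by simp [FreeMonoid.length_mul]; omega) hv rfl).commutator hl hv.1 hw.1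
        (ih _ (by simp [FreeMonoid.length_mul]; omega) hw rfl)

end FreeAlgebra

theorem stmt_9_general (F : Type) [Field F] (n : ℕ)
    (brm : FreeMonoid (Fin n) → MonoidAlgebra F (FreeMonoid (Fin n)))
    (hbrm1 : ∀ k : Fin n, brm (FreeMonoid.of k) = wordOf F (FreeMonoid.of k))
    (hbrm2 : ∀ u v w : FreeMonoid (Fin n), IsLyndon u → 2 ≤ FreeMonoid.length u →
      IsShirshov u v w → brm u = brm w * brm v - brm v * brm w)
    (l : FreeMonoid (Fin n)) (hl : IsLyndon l) :
    brm l - ((-1 : F) ^ (FreeMonoid.length l - 1)) • wordOf F l ∈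
      Submodule.span F
        { y : MonoidAlgebra F (FreeMonoid (Fin n)) | ∃ w : FreeMonoid (Fin n),
            FreeMonoid.length w = FreeMonoid.length l ∧ wlt l w ∧ y = wordOf F w } := by
  have h := hasLowestTerm_of_isLyndon hbrm1 hbrm2 hl
  unfold HasLowestTerm at h
  convert h using 3
  ext y
  simp [wordsAbove, eq_comm, and_assoc]

/-- for any Lyndon word `l`, in the free algebra one has
`[l]⁻ = (−1)^{|l|−1}·l + (linear combination of greater words of the same length)`,
where `[·]⁻` is defined by `[x_k]⁻ = x_k` and `[u]⁻ = [w]⁻[v]⁻ − [v]⁻[w]⁻` on the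
Shirshov decomposition `u = v·w`. -/
theorem stmt_9 (F : Type) [Field F] [CharZero F] (n : ℕ) (hn : 1 ≤ n)
    (brm : FreeMonoid (Fin n) → MonoidAlgebra F (FreeMonoid (Fin n)))
    (hbrm1 : ∀ k : Fin n, brm (FreeMonoid.of k) = wordOf F (FreeMonoid.of k))
    (hbrm2 : ∀ u v w : FreeMonoid (Fin n), IsLyndon u → 2 ≤ FreeMonoid.length u →
      IsShirshov u v w → brm u = brm w * brm v - brm v * brm w)
    (l : FreeMonoid (Fin n)) (hl : IsLyndon l) :
    brm l - ((-1 : F) ^ (FreeMonoid.length l - 1)) • wordOf F l ∈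
      Submodule.span F
        { y : MonoidAlgebra F (FreeMonoid (Fin n)) | ∃ w : FreeMonoid (Fin n),
            FreeMonoid.length w = FreeMonoid.length l ∧ wlt l w ∧ y = wordOf F w } :=
  stmt_9_general F n brm hbrm1 hbrm2 l hl
end
end
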